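/- arXiv:2008.09032 — 6 statements merged into one kernel-verified Lean document; each statement's English description precedes it below -/
import Mathlib

section
/- If x, y ∈ ℂ^d and the inner product ⟨x, y⟩ = y* x is real and nonnegative, then ‖x x* − y y*‖_F² ≥ (1/2)·‖x‖_2²·‖x − y‖_2². -/
open Matrix BigOperators
open scoped ComplexOrder

noncomputable section

/-- The measurement map 𝒜(X) = (aᵢ* X aᵢ)ᵢ (real part; real for Hermitian X). -/
def calA {d m : ℕ} (a : Fin m → Fin d → ℂ) (X : Matrix (Fin d) (Fin d) ℂ) : Fin m → ℝ :=
  fun i => (star (a i) ⬝ᵥ X.mulVec (a i)).re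

/-- ℓ2 norm of a real vector. -/
def l2 {m : ℕ} (v : Fin m → ℝ) : ℝ := Real.sqrt (∑ i, (v i) ^ 2)

/-- Entrywise ℓ1 norm of a complex matrix. -/
def matL1 {d : ℕ} (X : Matrix (Fin d) (Fin d) ℂ) : ℝ := ∑ i, ∑ j, ‖X i j‖

/-- Frobenius norm of a complex matrix. -/
def frob {d : ℕ} (X : Matrix (Fin d) (Fin d) ℂ) : ℝ :=
  Real.sqrt (∑ i, ∑ j, ‖X i j‖ ^ 2)

/-- ℓ1 norm of a complex vector. -/
def vecL1 {d : ℕ} (x : Fin d → ℂ) : ℝ := ∑ j, ‖x j‖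

/-- ℓ2 norm of a complex vector. -/
def vecL2 {d : ℕ} (x : Fin d → ℂ) : ℝ := Real.sqrt (∑ j, ‖x j‖ ^ 2)

/-- Number of nonzero entries of a complex vector. -/
def vecL0 {d : ℕ} (x : Fin d → ℂ) : ℕ := (Finset.univ.filter fun j => x j ≠ 0).card

/-!
With `a = ‖x‖²`, `b = ‖y‖²` and `c = ⟨x, y⟩ ≥ 0`, expanding entrywise gives
`‖x - y‖² = a + b - 2c` and `‖xx* - yy*‖_F² = a² + b² - 2|⟨x, y⟩|² = a² + b² - 2c²`.
The claim is then the real inequality `a (a + b - 2c) / 2 ≤ a² + b² - 2c²`, which holds for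
every `c ∈ [0, (a + b)/2]`; the upper bound on `c` is `‖x - y‖² ≥ 0`.
-/

theorem vecL2_sq {d : ℕ} (x : Fin d → ℂ) : vecL2 x ^ 2 = ∑ j, ‖x j‖ ^ 2 :=
  Real.sq_sqrt (by positivity)

theorem frob_sq {d : ℕ} (X : Matrix (Fin d) (Fin d) ℂ) : frob X ^ 2 = ∑ i, ∑ j, ‖X i j‖ ^ 2 :=
  Real.sq_sqrt (by positivity)

theorem vecL2_sub_sq {d : ℕ} (x y : Fin d → ℂ) :
    vecL2 (x - y) ^ 2 = vecL2 x ^ 2 + vecL2 y ^ 2 - 2 * (star y ⬝ᵥ x).re := by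
  simp only [vecL2_sq, Pi.sub_apply, Complex.sq_norm, Complex.normSq_sub, dotProduct,
    Complex.re_sum, Finset.sum_sub_distrib, Finset.sum_add_distrib, Finset.mul_sum]
  simp [mul_comm]

theorem Complex.norm_sq_sum_eq_sum_sum_re_mul_conj {ι : Type*} (s : Finset ι) (p : ι → ℂ) :
    ‖∑ i ∈ s, p i‖ ^ 2 = ∑ i ∈ s, ∑ j ∈ s, (p i * starRingEnd ℂ (p j)).re := by
  rw [Complex.sq_norm, ← Complex.ofReal_re (Complex.normSq _), ← Complex.mul_conj, map_sum,
    Finset.sum_mul_sum]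
  simp only [Complex.re_sum]

theorem norm_vecMulVec_sub_apply_sq {n : Type*} (x y : n → ℂ) (i j : n) :
    ‖(vecMulVec x (star x) - vecMulVec y (star y)) i j‖ ^ 2
      = ‖x i‖ ^ 2 * ‖x j‖ ^ 2 + ‖y i‖ ^ 2 * ‖y j‖ ^ 2
        - 2 * (star (y i) * x i * starRingEnd ℂ (star (y j) * x j)).re := by
  simp only [Matrix.sub_apply, vecMulVec_apply, Complex.sq_norm, Complex.normSq_sub,
    Pi.star_apply, Complex.star_def, Complex.normSq_conj, map_mul,
    Complex.conj_conj]
  ring_nf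

theorem frob_sq_vecMulVec_sub {d : ℕ} (x y : Fin d → ℂ) :
    frob (vecMulVec x (star x) - vecMulVec y (star y)) ^ 2
      = (vecL2 x ^ 2) ^ 2 + (vecL2 y ^ 2) ^ 2 - 2 * ‖star y ⬝ᵥ x‖ ^ 2 := by
  rw [frob_sq, vecL2_sq, vecL2_sq, sq (∑ j, _), sq (∑ j, _), Finset.sum_mul_sum,
    Finset.sum_mul_sum, dotProduct, Complex.norm_sq_sum_eq_sum_sum_re_mul_conj, Finset.mul_sum]
  simp only [norm_vecMulVec_sub_apply_sq, Pi.star_apply, Finset.sum_sub_distrib,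
    Finset.sum_add_distrib, Finset.mul_sum]

/-- The difference of the two sides is concave in `c`, and equals `(a² - ab + 2b²)/2 ≥ 0` at
`c = 0` and `(a - b)²/2` at `c = (a + b)/2`. -/
theorem half_mul_mul_sub_le_sq_add_sq_sub {a b c : ℝ} (hc : 0 ≤ c) (hcab : 2 * c ≤ a + b) :
    1 / 2 * a * (a + b - 2 * c) ≤ a ^ 2 + b ^ 2 - 2 * c ^ 2 := by
  nlinarith [mul_nonneg hc (sub_nonneg.2 hcab), sq_nonneg (a - b), sq_nonneg (2 * a - b)]

/-- Lemma 2.2: if ⟨x,y⟩ = y*x is real nonnegative then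
    ‖xx* − yy*‖_F² ≥ (1/2)‖x‖₂²‖x−y‖₂². -/
theorem rank_one_diff_lower_bound {d : ℕ} (x y : Fin d → ℂ)
    (him : (∑ j, (starRingEnd ℂ) (y j) * x j).im = 0)
    (hre : 0 ≤ (∑ j, (starRingEnd ℂ) (y j) * x j).re) :
    (1/2) * (vecL2 x) ^ 2 * (vecL2 (x - y)) ^ 2 ≤
      (frob (vecMulVec x (star x) - vecMulVec y (star y))) ^ 2 := by
  set c : ℂ := star y ⬝ᵥ x
  have hnorm : ‖c‖ ^ 2 = c.re ^ 2 := by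
    rw [Complex.sq_norm, Complex.normSq_apply, show c.im = 0 from him]
    ring
  have hdist := vecL2_sub_sq x y
  rw [frob_sq_vecMulVec_sub, hnorm, hdist]
  refine half_mul_mul_sub_le_sq_add_sq_sub hre ?_
  linarith [sq_nonneg (vecL2 (x - y))]
end
end

section
/- Let X, Y ∈ ℂ^{d×d} be Hermitian positive semidefinite with Tr(XY) = 0, let λ ≥ 0, and suppose rank(X) = r with r ≥ 1. Then ‖λ(I − X/‖X‖_F) − Y‖_F ≥ λ(√r − 1). -/
/-! Let `P` be the orthogonal projection onto the range of `X`, so that `‖P‖_F = √r`, `P X = X`,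
and `P Y = 0`, since for positive semidefinite matrices `Tr(XY) = 0` already forces `XY = 0`.
Pairing `Z = λ(I − X/‖X‖_F) − Y` with `P` gives `Tr(PZ) = λ(r − Tr X/‖X‖_F) ≥ λ(r − √r)`,
because `Tr X = Tr(PX) ≤ √r ‖X‖_F`, while Cauchy–Schwarz bounds `Tr(PZ) ≤ √r ‖Z‖_F`. -/

open Matrix BigOperators
open scoped ComplexOrder

noncomputable section

namespace Matrix

variable {n 𝕜 : Type*} [RCLike 𝕜] [Fintype n] [DecidableEq n]

theorem PosSemidef.mul_eq_zero_of_trace_mul_eq_zero {A B : Matrix n n 𝕜} (hA : A.PosSemidef)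
    (hB : B.PosSemidef) (h : (A * B).trace = 0) : A * B = 0 := by
  -- with `A = S⋆S` and `B = T⋆T`, `Tr(AB) = ‖S T⋆‖_F²`
  open scoped MatrixOrder in
  obtain ⟨S, rfl⟩ := CStarAlgebra.nonneg_iff_eq_star_mul_self.mp hA.nonneg
  obtain ⟨T, rfl⟩ := CStarAlgebra.nonneg_iff_eq_star_mul_self.mp hB.nonneg
  have hST : S * star T = 0 := by
    rw [← trace_conjTranspose_mul_self_eq_zero_iff, ← h]
    simp only [star_eq_conjTranspose, conjTranspose_mul, conjTranspose_conjTranspose, mul_assoc]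
    rw [trace_mul_comm]
    simp only [mul_assoc]
  calc star S * S * (star T * T) = star S * (S * star T) * T := by simp only [mul_assoc]
    _ = 0 := by rw [hST, mul_zero, zero_mul]

namespace IsHermitian

lemma trace_cfc {A : Matrix n n 𝕜} (hA : A.IsHermitian) (f : ℝ → ℝ) :
    (cfc f A).trace = ∑ i, (f (hA.eigenvalues i) : 𝕜) := by
  rw [hA.cfc_eq, IsHermitian.cfc, Unitary.conjStarAlgAut_apply, trace_mul_cycle,
    Unitary.coe_star_mul_self, one_mul, trace_diagonal]
  rfl

end IsHermitian

/-- The orthogonal projection onto the range of a Hermitian matrix: `x⁻¹ * x` is the indicator of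
`x ≠ 0` on the spectrum, because `0⁻¹ = 0`. -/
def supportProj (A : Matrix n n 𝕜) : Matrix n n 𝕜 := cfc (fun x : ℝ => x⁻¹ * x) A

lemma IsHermitian.supportProj_eq_cfc_inv_mul {A : Matrix n n 𝕜} (hA : A.IsHermitian) :
    A.supportProj = cfc (fun x : ℝ => x⁻¹) A * A := by
  rw [supportProj, cfc_mul (fun x : ℝ => x⁻¹) (fun x => x) _ (finite_real_spectrum.continuousOn _),
    cfc_id' ℝ A]

lemma isIdempotentElem_supportProj (A : Matrix n n 𝕜) : IsIdempotentElem A.supportProj := by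
  rw [IsIdempotentElem, supportProj, ← cfc_mul _ _ _ (finite_real_spectrum.continuousOn _)
    (finite_real_spectrum.continuousOn _)]
  refine cfc_congr fun x _ => ?_
  rcases eq_or_ne x 0 with rfl | hx
  · simp
  · simp [hx]

lemma isStarProjection_supportProj (A : Matrix n n 𝕜) : IsStarProjection A.supportProj :=
  ⟨isIdempotentElem_supportProj A, cfc_predicate _ A⟩

lemma IsHermitian.supportProj_mul_self {A : Matrix n n 𝕜} (hA : A.IsHermitian) :
    A.supportProj * A = A := by
  calc A.supportProj * A = cfc (fun x : ℝ => x⁻¹ * x * x) A := by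
        rw [cfc_mul _ (fun x => x) A (finite_real_spectrum.continuousOn _), cfc_id' ℝ A,
          supportProj]
    _ = A := by simp only [inv_mul_mul_self, cfc_id' ℝ A]

lemma IsHermitian.supportProj_mul_eq_zero {A B : Matrix n n 𝕜} (hA : A.IsHermitian)
    (h : A * B = 0) : A.supportProj * B = 0 := by
  rw [hA.supportProj_eq_cfc_inv_mul, mul_assoc, h, mul_zero]

lemma IsHermitian.trace_supportProj {A : Matrix n n 𝕜} (hA : A.IsHermitian) :
    A.supportProj.trace = A.rank := by
  rw [supportProj, hA.trace_cfc, hA.rank_eq_card_non_zero_eigs, Fintype.card_subtype,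
    Finset.card_filter]
  push_cast
  refine Finset.sum_congr rfl fun i _ => ?_
  rcases eq_or_ne (hA.eigenvalues i) 0 with h | h <;> simp [h]

end Matrix

lemma re_trace_conjTranspose_mul {d : ℕ} (M N : Matrix (Fin d) (Fin d) ℂ) :
    (Mᴴ * N).trace.re = ∑ i, ∑ j, (star (M i j) * N i j).re := by
  simp only [trace, diag_apply, mul_apply, conjTranspose_apply, Complex.re_sum]
  exact Finset.sum_comm

lemma re_trace_conjTranspose_mul_le {d : ℕ} (M N : Matrix (Fin d) (Fin d) ℂ) :
    (Mᴴ * N).trace.re ≤ frob M * frob N := by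
  rw [re_trace_conjTranspose_mul]
  calc ∑ i, ∑ j, (star (M i j) * N i j).re
      ≤ ∑ i, ∑ j, ‖M i j‖ * ‖N i j‖ := by
        gcongr with i _ j _
        refine (Complex.re_le_norm _).trans_eq ?_
        simp
    _ = ∑ p : Fin d × Fin d, ‖M p.1 p.2‖ * ‖N p.1 p.2‖ :=
        (Fintype.sum_prod_type fun p : Fin d × Fin d => ‖M p.1 p.2‖ * ‖N p.1 p.2‖).symm
    _ ≤ √(∑ p : Fin d × Fin d, ‖M p.1 p.2‖ ^ 2) * √(∑ p : Fin d × Fin d, ‖N p.1 p.2‖ ^ 2) :=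
        Real.sum_mul_le_sqrt_mul_sqrt _ _ _
    _ = frob M * frob N := by rw [frob, frob, Fintype.sum_prod_type, Fintype.sum_prod_type]

lemma frob_eq_sqrt_re_trace {d : ℕ} (M : Matrix (Fin d) (Fin d) ℂ) :
    frob M = √((Mᴴ * M).trace.re) := by
  rw [frob, re_trace_conjTranspose_mul]
  congr 1
  refine Finset.sum_congr rfl fun i _ => Finset.sum_congr rfl fun j _ => ?_
  rw [Complex.star_def, ← Complex.normSq_eq_conj_mul_self, Complex.sq_norm, Complex.ofReal_re]

lemma IsStarProjection.frob_eq_sqrt_re_trace {d : ℕ} {P : Matrix (Fin d) (Fin d) ℂ}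
    (hP : IsStarProjection P) : frob P = √(P.trace.re) := by
  rw [_root_.frob_eq_sqrt_re_trace, ← star_eq_conjTranspose, hP.isSelfAdjoint.star_eq,
    hP.isIdempotentElem.eq]

/-- Lemma 2.3: if X, Y ⪰ 0, Tr(XY) = 0 and rank X = r ≥ 1, then
    ‖λ(I − X/‖X‖_F) − Y‖_F ≥ λ(√r − 1). -/
theorem psd_orthogonal_lower_bound {d : ℕ} (X Y : Matrix (Fin d) (Fin d) ℂ)
    (hX : X.PosSemidef) (hY : Y.PosSemidef) (htr : (X * Y).trace = 0)
    (lam : ℝ) (hlam : 0 ≤ lam) (r : ℕ) (hr : X.rank = r) (hr1 : 1 ≤ r) :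
    lam * (Real.sqrt r - 1) ≤
      frob ((lam : ℂ) • ((1 : Matrix (Fin d) (Fin d) ℂ) - (frob X : ℂ)⁻¹ • X) - Y) := by
  set Z := (lam : ℂ) • ((1 : Matrix (Fin d) (Fin d) ℂ) - (frob X : ℂ)⁻¹ • X) - Y
  set P := X.supportProj
  have hP : IsStarProjection P := isStarProjection_supportProj X
  have hPH : Pᴴ = P := hP.isSelfAdjoint.star_eq
  have hPX : P * X = X := hX.isHermitian.supportProj_mul_self
  have hPY : P * Y = 0 :=
    hX.isHermitian.supportProj_mul_eq_zero (hX.mul_eq_zero_of_trace_mul_eq_zero hY htr)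
  have hPtr : P.trace = r := by rw [hX.isHermitian.trace_supportProj, hr]
  have hPfrob : frob P = √r := by rw [hP.frob_eq_sqrt_re_trace, hPtr]; simp
  have htrX : X.trace.re ≤ √r * frob X := by
    simpa [hPH, hPX, hPfrob] using re_trace_conjTranspose_mul_le P X
  have htrPZ : (Pᴴ * Z).trace.re = lam * (r - X.trace.re / frob X) := by
    simp [Z, hPH, mul_sub, hPX, hPY, hPtr, ← Complex.ofReal_inv, div_eq_inv_mul]
  have hsr : 0 < √(r : ℝ) := Real.sqrt_pos.mpr (by exact_mod_cast hr1)
  refine le_of_mul_le_mul_left ?_ hsr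
  calc √r * (lam * (√r - 1)) = lam * (r - √r) := by
        linear_combination lam * Real.mul_self_sqrt (Nat.cast_nonneg (α := ℝ) r)
    _ ≤ lam * (r - X.trace.re / frob X) := by
        gcongr
        exact div_le_of_le_mul₀ (by simp [frob]) hsr.le htrX
    _ = (Pᴴ * Z).trace.re := htrPZ.symm
    _ ≤ √r * frob Z := hPfrob ▸ re_trace_conjTranspose_mul_le P Z
end
end

section
/- Let X, Y ∈ ℂ^{d×d} be Hermitian positive semidefinite with Tr(XY) = 0, let λ ≥ 0, and let r = rank(X). Then ‖λ I − Y‖_F ≥ λ·√r. -/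
/-
Write X = AᴴA and Y = BᴴB. Then Tr(XY) = Tr((BAᴴ)ᴴ(BAᴴ)) = ‖BAᴴ‖_F², so Tr(XY) = 0 forces
BAᴴ = 0 and hence XY = 0. Consequently rank X + rank Y ≤ d, so at least r eigenvalues μᵢ of Y
vanish. Diagonalising Y by a unitary, which preserves the Frobenius norm,
‖λI − Y‖_F² = ∑ᵢ (λ − μᵢ)² ≥ r λ².
-/

open Matrix BigOperators
open scoped ComplexOrder

noncomputable section

open Finset

lemma card_filter_eq_zero_mul_sq_le_sum_sub_sq {ι : Type*} [Fintype ι] (f : ι → ℝ) (c : ℝ) :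
    #{i | f i = 0} * c ^ 2 ≤ ∑ i, (c - f i) ^ 2 := by
  calc (#{i | f i = 0} : ℝ) * c ^ 2 = ∑ i ∈ {i | f i = 0}, (c - f i) ^ 2 := by
        rw [sum_congr rfl fun i hi ↦ by rw [(mem_filter.mp hi).2, sub_zero],
          sum_const, nsmul_eq_mul]
    _ ≤ ∑ i, (c - f i) ^ 2 :=
        sum_le_sum_of_subset_of_nonneg (subset_univ _) fun i _ _ ↦ sq_nonneg _

namespace Matrix

variable {𝕜 n : Type*} [RCLike 𝕜] [Fintype n]

lemma re_trace_conjTranspose_mul_self {m : Type*} [Fintype m] (A : Matrix m n 𝕜) :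
    RCLike.re (Aᴴ * A).trace = ∑ i, ∑ j, ‖A i j‖ ^ 2 := by
  simp only [trace, diag, mul_apply, conjTranspose_apply, map_sum, RCLike.star_def,
    RCLike.conj_mul, ← RCLike.ofReal_pow, RCLike.ofReal_re]
  exact sum_comm

lemma PosSemidef.mul_eq_zero_of_trace_mul_eq_zero_s5 {X Y : Matrix n n 𝕜} (hX : X.PosSemidef)
    (hY : Y.PosSemidef) (h : (X * Y).trace = 0) : X * Y = 0 := by
  classical
  open scoped MatrixOrder in
  obtain ⟨A, rfl⟩ := CStarAlgebra.nonneg_iff_eq_star_mul_self.mp hX.nonneg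
  open scoped MatrixOrder in
  obtain ⟨B, rfl⟩ := CStarAlgebra.nonneg_iff_eq_star_mul_self.mp hY.nonneg
  simp only [star_eq_conjTranspose] at h ⊢
  have hBA : B * Aᴴ = 0 := by
    rw [← trace_conjTranspose_mul_self_eq_zero_iff, ← h, conjTranspose_mul,
      conjTranspose_conjTranspose, ← Matrix.mul_assoc, trace_mul_comm]
    simp only [Matrix.mul_assoc]
  calc Aᴴ * A * (Bᴴ * B) = Aᴴ * (B * Aᴴ)ᴴ * B := by
        simp only [conjTranspose_mul, conjTranspose_conjTranspose, Matrix.mul_assoc]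
    _ = 0 := by rw [hBA, conjTranspose_zero, Matrix.mul_zero, Matrix.zero_mul]

lemma trace_conjStarAlgAut {R : Type*} [CommSemiring R] [StarRing R] [DecidableEq n]
    (U : unitary (Matrix n n R)) (M : Matrix n n R) :
    (Unitary.conjStarAlgAut R _ U M).trace = M.trace := by
  rw [Unitary.conjStarAlgAut_apply, trace_mul_cycle, Unitary.coe_star_mul_self, Matrix.one_mul]

lemma IsHermitian.sum_norm_sq_smul_one_sub [DecidableEq n] {A : Matrix n n 𝕜}
    (hA : A.IsHermitian) (c : ℝ) :
    ∑ i, ∑ j, ‖((c : 𝕜) • (1 : Matrix n n 𝕜) - A) i j‖ ^ 2 = ∑ i, (c - hA.eigenvalues i) ^ 2 := by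
  set φ := Unitary.conjStarAlgAut 𝕜 (Matrix n n 𝕜) hA.eigenvectorUnitary
  set D : Matrix n n 𝕜 := diagonal fun i ↦ ((c - hA.eigenvalues i : ℝ) : 𝕜)
  have hD : (c : 𝕜) • 1 - A = φ D := by
    conv_lhs => rw [hA.spectral_theorem]
    rw [← map_one φ, ← map_smul, ← map_sub]
    congr 1
    ext i j
    by_cases hij : i = j <;> simp [D, hij, Algebra.algebraMap_eq_smul_one, sub_smul]
  rw [← re_trace_conjTranspose_mul_self, hD, ← star_eq_conjTranspose, ← map_star, ← map_mul,
    trace_conjStarAlgAut]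
  simp [D, star_eq_conjTranspose, diagonal_conjTranspose, diagonal_mul_diagonal, trace_diagonal, sq]

lemma IsHermitian.card_eigenvalues_eq_zero_add_rank [DecidableEq n] {A : Matrix n n 𝕜}
    (hA : A.IsHermitian) : #{i | hA.eigenvalues i = 0} + A.rank = Fintype.card n := by
  rw [hA.rank_eq_card_non_zero_eigs, Fintype.card_subtype]
  exact card_filter_add_card_filter_not _

end Matrix

theorem psd_orthogonal_identity_bound_general {d : ℕ} (X Y : Matrix (Fin d) (Fin d) ℂ)
    (hX : X.PosSemidef) (hY : Y.PosSemidef) (htr : (X * Y).trace = 0)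
    (lam : ℝ) (r : ℕ) (hr : X.rank = r) :
    lam * Real.sqrt r ≤ frob ((lam : ℂ) • (1 : Matrix (Fin d) (Fin d) ℂ) - Y) := by
  have hrank : X.rank + Y.rank ≤ d := by
    simpa using rank_add_rank_le_card_of_mul_eq_zero (hX.mul_eq_zero_of_trace_mul_eq_zero_s5 hY htr)
  have hzero := hY.1.card_eigenvalues_eq_zero_add_rank
  calc lam * √r ≤ |lam| * √r := by gcongr; exact le_abs_self lam
    _ = √(r * lam ^ 2) := by rw [Real.sqrt_mul' _ (sq_nonneg _), Real.sqrt_sq_eq_abs, mul_comm]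
    _ ≤ √(#{i | hY.1.eigenvalues i = 0} * lam ^ 2) := by
        gcongr
        norm_cast
        simp only [Fintype.card_fin] at hzero
        omega
    _ ≤ √(∑ i, (lam - hY.1.eigenvalues i) ^ 2) := by
        gcongr; exact card_filter_eq_zero_mul_sq_le_sum_sub_sq _ _
    _ = frob ((lam : ℂ) • (1 : Matrix (Fin d) (Fin d) ℂ) - Y) := by
        rw [frob]
        -- `rw` fails here: the lemma's cast is `RCLike.ofReal`, only defeq to `Complex.ofReal`
        exact congrArg _ (hY.1.sum_norm_sq_smul_one_sub lam).symm

/-- Inner estimate in Lemma 2.3: ‖λI − Y‖_F ≥ λ√r where r = rank X,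
    for X, Y ⪰ 0 with Tr(XY) = 0. -/
theorem psd_orthogonal_identity_bound {d : ℕ} (X Y : Matrix (Fin d) (Fin d) ℂ)
    (hX : X.PosSemidef) (hY : Y.PosSemidef) (htr : (X * Y).trace = 0)
    (lam : ℝ) (hlam : 0 ≤ lam) (r : ℕ) (hr : X.rank = r) :
    lam * Real.sqrt r ≤ frob ((lam : ℂ) • (1 : Matrix (Fin d) (Fin d) ℂ) - Y) :=
  psd_orthogonal_identity_bound_general X Y hX hY htr lam r hr
end
end

section
/- Let x0 ∈ ℂ^d, w ∈ ℝ^m, b = 𝒜(x0 x0*) + w, and μ > 0. If x# is a global minimizer over ℂ^d of x ↦ μ‖x‖_1² + (1/2)‖𝒜(x x*) − b‖_2², then ‖x#‖_1 ≤ ‖x0‖_1 + ‖w‖_2/√(2μ). -/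
open Matrix BigOperators
open scoped ComplexOrder

noncomputable section

lemma vecL1_nonneg {d : ℕ} (x : Fin d → ℂ) : 0 ≤ vecL1 x :=
  Finset.sum_nonneg fun _ _ => norm_nonneg _

lemma l2_nonneg {m : ℕ} (v : Fin m → ℝ) : 0 ≤ l2 v :=
  Real.sqrt_nonneg _

lemma l2_sub_eq_of_eq_add {m : ℕ} {v w b : Fin m → ℝ} (h : ∀ i, b i = v i + w i) :
    l2 (fun i => v i - b i) = l2 w := by
  unfold l2
  congr 1
  refine Finset.sum_congr rfl fun i _ => ?_
  simp only [h i]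
  ring

lemma le_add_of_sq_le_sq_add_sq {a b c : ℝ} (hb : 0 ≤ b) (hc : 0 ≤ c)
    (h : a ^ 2 ≤ b ^ 2 + c ^ 2) : a ≤ b + c :=
  have hsq : a ^ 2 ≤ (b + c) ^ 2 := by nlinarith [mul_nonneg hb hc]
  (le_abs_self a).trans (abs_le_of_sq_le_sq hsq (add_nonneg hb hc))

lemma le_add_div_sqrt_of_mul_sq_add_le {μ A B R W : ℝ} (hμ : 0 < μ) (hB : 0 ≤ B) (hW : 0 ≤ W)
    (h : μ * A ^ 2 + 1 / 2 * R ^ 2 ≤ μ * B ^ 2 + 1 / 2 * W ^ 2) :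
    A ≤ B + W / Real.sqrt (2 * μ) := by
  refine le_add_of_sq_le_sq_add_sq hB (div_nonneg hW (Real.sqrt_nonneg _)) ?_
  rw [div_pow, Real.sq_sqrt (by positivity), ← sub_le_iff_le_add', le_div_iff₀ (by positivity)]
  nlinarith [sq_nonneg R]

/-- Bound (2.12): ℓ1 norm of the minimizer of the vector model. -/
theorem minimizer_l1_bound {d m : ℕ} (a : Fin m → Fin d → ℂ)
    (x0 : Fin d → ℂ) (w b : Fin m → ℝ)
    (hb : ∀ i, b i = calA a (vecMulVec x0 (star x0)) i + w i)
    (mu : ℝ) (hmu : 0 < mu)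
    (xs : Fin d → ℂ)
    (hmin : ∀ x : Fin d → ℂ,
      mu * (vecL1 xs) ^ 2
          + (1/2) * (l2 (fun i => calA a (vecMulVec xs (star xs)) i - b i)) ^ 2 ≤
      mu * (vecL1 x) ^ 2
          + (1/2) * (l2 (fun i => calA a (vecMulVec x (star x)) i - b i)) ^ 2) :
    vecL1 xs ≤ vecL1 x0 + l2 w / Real.sqrt (2 * mu) := by
  have hx0 := hmin x0
  rw [l2_sub_eq_of_eq_add hb] at hx0
  exact le_add_div_sqrt_of_mul_sq_add_le hmu (vecL1_nonneg x0) (l2_nonneg w) hx0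
end
end

section
/- Let x0 ∈ ℂ^d with ‖x0‖_0 ≤ k and support T0 = {j : (x0)_j ≠ 0}, let w ∈ ℝ^m, b = 𝒜(x0 x0*) + w, and μ > 0. If x# is a global minimizer over ℂ^d of x ↦ μ‖x‖_1² + (1/2)‖𝒜(x x*) − b‖_2², then Σ_{j ∉ T0} |x#_j| ≤ √k · ‖x#_{T0} − x0‖_2 + ‖w‖_2/√(2μ), where x#_{T0} denotes the vector equal to x# on T0 and zero elsewhere. -/
open Matrix BigOperators
open scoped ComplexOrder

noncomputable section

/-!
Comparing the objective at the minimizer `x#` with its value at `x0`, where the residual is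
just `-w`, gives `‖x#‖₁ ≤ ‖x0‖₁ + ‖w‖₂ / √(2μ)`. Since `x0` vanishes off `T0`, the excess of
`‖x#‖₁` over `‖x0‖₁` controls the off-support mass up to the on-support error
`∑_{j ∈ T0} |x#_j - x0_j|`, and Cauchy–Schwarz over the at most `k` indices of `T0` bounds this
by `√k ‖x#_{T0} - x0‖₂`.
-/

open Finset

def objective {d m : ℕ} (a : Fin m → Fin d → ℂ) (b : Fin m → ℝ) (mu : ℝ) (x : Fin d → ℂ) : ℝ :=
  mu * (vecL1 x) ^ 2 + (1/2) * (l2 (fun i => calA a (vecMulVec x (star x)) i - b i)) ^ 2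

lemma l2_neg {m : ℕ} (v : Fin m → ℝ) : l2 (fun i => -v i) = l2 v := by
  simp [l2]

lemma objective_eq_of_forall_eq_add {d m : ℕ} (a : Fin m → Fin d → ℂ) (x0 : Fin d → ℂ)
    (w b : Fin m → ℝ) (hb : ∀ i, b i = calA a (vecMulVec x0 (star x0)) i + w i) (mu : ℝ) :
    objective a b mu x0 = mu * (vecL1 x0) ^ 2 + (1/2) * (l2 w) ^ 2 := by
  have hres : (fun i => calA a (vecMulVec x0 (star x0)) i - b i) = fun i => -w i := by
    funext i
    rw [hb i]
    ring
  rw [objective, hres, l2_neg]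

lemma le_add_div_sqrt_of_mul_sq_le {μ s t W : ℝ} (hμ : 0 < μ) (ht : 0 ≤ t) (hW : 0 ≤ W)
    (h : μ * s ^ 2 ≤ μ * t ^ 2 + 1/2 * W ^ 2) : s ≤ t + W / √(2 * μ) := by
  set c := W / √(2 * μ)
  have hc : 0 ≤ c := by positivity
  have hWc : W ^ 2 = 2 * μ * c ^ 2 := by
    rw [div_pow, Real.sq_sqrt (by positivity)]
    field_simp
  have hsq : s ^ 2 ≤ (t + c) ^ 2 := by
    refine le_of_mul_le_mul_left ?_ hμ
    nlinarith [mul_nonneg ht hc]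
  exact (abs_le_of_sq_le_sq' hsq (by positivity)).2

lemma vecL1_le_of_objective_le {d m : ℕ} (a : Fin m → Fin d → ℂ) (x0 : Fin d → ℂ)
    (w b : Fin m → ℝ) (hb : ∀ i, b i = calA a (vecMulVec x0 (star x0)) i + w i)
    {mu : ℝ} (hmu : 0 < mu) {xs : Fin d → ℂ}
    (hle : objective a b mu xs ≤ objective a b mu x0) :
    vecL1 xs ≤ vecL1 x0 + l2 w / √(2 * mu) := by
  rw [objective_eq_of_forall_eq_add a x0 w b hb, objective] at hle
  refine le_add_div_sqrt_of_mul_sq_le hmu (sum_nonneg fun _ _ => norm_nonneg _)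
    (Real.sqrt_nonneg _) ?_
  nlinarith [sq_nonneg (l2 (fun i => calA a (vecMulVec xs (star xs)) i - b i))]

lemma sum_norm_filter_eq_zero_le {d : ℕ} (x0 y : Fin d → ℂ) :
    ∑ j ∈ univ.filter (fun j => x0 j = 0), ‖y j‖ ≤
      ∑ j ∈ univ.filter (fun j => x0 j ≠ 0), ‖y j - x0 j‖ + (vecL1 y - vecL1 x0) := by
  have hy : vecL1 y = ∑ j ∈ univ.filter (fun j => x0 j = 0), ‖y j‖
      + ∑ j ∈ univ.filter (fun j => x0 j ≠ 0), ‖y j‖ :=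
    (sum_filter_add_sum_filter_not _ _ _).symm
  have hx0 : vecL1 x0 = ∑ j ∈ univ.filter (fun j => x0 j ≠ 0), ‖x0 j‖ := by
    rw [sum_filter]
    exact sum_congr rfl fun j _ => by by_cases h : x0 j = 0 <;> simp [h]
  have hon : ∑ j ∈ univ.filter (fun j => x0 j ≠ 0), (‖x0 j‖ - ‖y j‖) ≤
      ∑ j ∈ univ.filter (fun j => x0 j ≠ 0), ‖y j - x0 j‖ :=
    sum_le_sum fun j _ => by simpa only [norm_sub_rev] using norm_sub_norm_le (x0 j) (y j)
  rw [sum_sub_distrib] at hon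
  linarith

lemma sum_le_sqrt_card_mul_sqrt_sum_sq {ι : Type*} (s : Finset ι) (f : ι → ℝ) :
    ∑ i ∈ s, f i ≤ √(#s) * √(∑ i ∈ s, f i ^ 2) := by
  rw [← Real.sqrt_mul (Nat.cast_nonneg _)]
  exact Real.le_sqrt_of_sq_le sq_sum_le_card_mul_sum_sq

lemma vecL2_restrict_sub {d : ℕ} (x0 y : Fin d → ℂ) :
    vecL2 (fun j => (if x0 j ≠ 0 then y j else 0) - x0 j) =
      √(∑ j ∈ univ.filter (fun j => x0 j ≠ 0), ‖y j - x0 j‖ ^ 2) := by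
  rw [vecL2, sum_filter]
  congr 1
  exact sum_congr rfl fun j _ => by by_cases h : x0 j = 0 <;> simp [h]

lemma sum_support_norm_sub_le {d k : ℕ} {x0 : Fin d → ℂ} (hx0 : vecL0 x0 ≤ k) (y : Fin d → ℂ) :
    ∑ j ∈ univ.filter (fun j => x0 j ≠ 0), ‖y j - x0 j‖ ≤
      √k * vecL2 (fun j => (if x0 j ≠ 0 then y j else 0) - x0 j) := by
  rw [vecL2_restrict_sub]
  refine (sum_le_sqrt_card_mul_sqrt_sum_sq _ _).trans ?_
  gcongr
  exact_mod_cast hx0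

/-- Bound (3.8): off-support ℓ1 mass of the minimizer. -/
theorem minimizer_offsupport_bound {d m : ℕ} (a : Fin m → Fin d → ℂ)
    (k : ℕ) (x0 : Fin d → ℂ) (hx0 : vecL0 x0 ≤ k)
    (w b : Fin m → ℝ)
    (hb : ∀ i, b i = calA a (vecMulVec x0 (star x0)) i + w i)
    (mu : ℝ) (hmu : 0 < mu)
    (xs : Fin d → ℂ)
    (hmin : ∀ x : Fin d → ℂ,
      mu * (vecL1 xs) ^ 2
          + (1/2) * (l2 (fun i => calA a (vecMulVec xs (star xs)) i - b i)) ^ 2 ≤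
      mu * (vecL1 x) ^ 2
          + (1/2) * (l2 (fun i => calA a (vecMulVec x (star x)) i - b i)) ^ 2) :
    ∑ j ∈ Finset.univ.filter (fun j => x0 j = 0), ‖xs j‖ ≤
      Real.sqrt k * vecL2 (fun j => (if x0 j ≠ 0 then xs j else 0) - x0 j)
        + l2 w / Real.sqrt (2 * mu) := by
  have hL1 : vecL1 xs ≤ vecL1 x0 + l2 w / √(2 * mu) :=
    vecL1_le_of_objective_le a x0 w b hb hmu (hmin x0)
  calc ∑ j ∈ univ.filter (fun j => x0 j = 0), ‖xs j‖
      ≤ ∑ j ∈ univ.filter (fun j => x0 j ≠ 0), ‖xs j - x0 j‖ + (vecL1 xs - vecL1 x0) :=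
        sum_norm_filter_eq_zero_le x0 xs
    _ ≤ √k * vecL2 (fun j => (if x0 j ≠ 0 then xs j else 0) - x0 j) + l2 w / √(2 * mu) :=
        add_le_add (sum_support_norm_sub_le hx0 xs) (by linarith)
end
end

section
/- Let b ∈ ℝ^m, λ ≥ 0 and μ ≥ 0, and define F(X) := λ(Tr(X) − ‖X‖_F) + μ‖X‖_1 + (1/2)‖𝒜(X) − b‖_2² for Hermitian X. Let X ⪰ 0, set Y := X/‖X‖_F if X ≠ 0 and Y := 0 if X = 0, and let X' be a global minimizer over {Z ⪰ 0} of Z ↦ (1/2)‖𝒜(Z) − b‖_2² + λ·Tr(Z) − λ·Re⟨Z, Y⟩ + μ‖Z‖_1, where ⟨Z, Y⟩ := Tr(Y* Z). Then F(X') ≤ F(X). -/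
/-! With `G(Z) = ½‖𝒜(Z) − b‖² + λ Tr Z + μ‖Z‖₁` we have `F = G − λ‖·‖_F`, and the step minimizes the
surrogate `G − λ Re⟨·, Y⟩`. Since `‖Y‖_F ≤ 1`, Cauchy–Schwarz gives `Re⟨Z, Y⟩ ≤ ‖Z‖_F` for every `Z`,
with equality at `Z = X`. Hence `F(X') ≤ G(X') − λ Re⟨X', Y⟩ ≤ G(X) − λ Re⟨X, Y⟩ = F(X)`.
-/

open Matrix BigOperators
open scoped ComplexOrder

noncomputable section

section Vectorization

variable {m n : Type*}

/-- Vectorization: it turns `Tr(Aᴴ B)` into the inner product of `EuclideanSpace ℂ (m × n)` and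
`frob` into its norm. -/
def vecE (A : Matrix m n ℂ) : EuclideanSpace ℂ (m × n) := WithLp.toLp 2 fun p => A p.1 p.2

lemma vecE_smul (c : ℂ) (A : Matrix m n ℂ) : vecE (c • A) = c • vecE A := rfl

lemma vecE_eq_zero_iff {A : Matrix m n ℂ} : vecE A = 0 ↔ A = 0 := by
  refine ⟨fun h => ?_, fun h => h ▸ rfl⟩
  ext i j
  exact congrFun (congrArg WithLp.ofLp h) (i, j)

lemma inner_vecE [Fintype m] [Fintype n] (A B : Matrix m n ℂ) :
    inner ℂ (vecE A) (vecE B) = (Aᴴ * B).trace := by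
  simp [vecE, PiLp.inner_apply, Matrix.trace, Matrix.mul_apply, Fintype.sum_prod_type,
    Finset.sum_comm (γ := m), mul_comm]

end Vectorization

section Frobenius

variable {d : ℕ}

lemma frob_eq_norm_vecE (X : Matrix (Fin d) (Fin d) ℂ) : frob X = ‖vecE X‖ := by
  simp [frob, vecE, EuclideanSpace.norm_eq, Fintype.sum_prod_type]

lemma frob_smul (c : ℂ) (X : Matrix (Fin d) (Fin d) ℂ) : frob (c • X) = ‖c‖ * frob X := by
  rw [frob_eq_norm_vecE, frob_eq_norm_vecE, vecE_smul, norm_smul]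

lemma frob_pos {X : Matrix (Fin d) (Fin d) ℂ} (hX : X ≠ 0) : 0 < frob X := by
  rw [frob_eq_norm_vecE, norm_pos_iff]
  exact vecE_eq_zero_iff.not.mpr hX

lemma re_trace_conjTranspose_mul_le_s11 (A B : Matrix (Fin d) (Fin d) ℂ) :
    ((Aᴴ * B).trace).re ≤ frob A * frob B := by
  rw [← inner_vecE, frob_eq_norm_vecE, frob_eq_norm_vecE]
  exact re_inner_le_norm (𝕜 := ℂ) (vecE A) (vecE B)

lemma re_trace_conjTranspose_mul_self (X : Matrix (Fin d) (Fin d) ℂ) :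
    ((Xᴴ * X).trace).re = frob X ^ 2 := by
  rw [← inner_vecE, inner_self_eq_norm_sq_to_K, ← frob_eq_norm_vecE]
  norm_cast

/-- The subgradient of `frob` at `X` chosen by the algorithm (`0` at `X = 0`). -/
def frobNormalize (X : Matrix (Fin d) (Fin d) ℂ) : Matrix (Fin d) (Fin d) ℂ :=
  if X = 0 then 0 else (frob X : ℂ)⁻¹ • X

lemma frob_frobNormalize_le_one (X : Matrix (Fin d) (Fin d) ℂ) : frob (frobNormalize X) ≤ 1 := by
  unfold frobNormalize
  split_ifs with hX
  · simp [frob_eq_norm_vecE, vecE_eq_zero_iff.mpr]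
  · rw [frob_smul, norm_inv, Complex.norm_real, Real.norm_of_nonneg (frob_pos hX).le,
      inv_mul_cancel₀ (frob_pos hX).ne']

lemma re_trace_frobNormalize_mul_le (X Z : Matrix (Fin d) (Fin d) ℂ) :
    (((frobNormalize X)ᴴ * Z).trace).re ≤ frob Z := calc
  _ ≤ frob (frobNormalize X) * frob Z := re_trace_conjTranspose_mul_le_s11 _ _
  _ ≤ 1 * frob Z := by
    gcongr
    · exact Real.sqrt_nonneg _
    · exact frob_frobNormalize_le_one X
  _ = frob Z := one_mul _

lemma re_trace_frobNormalize_mul_self (X : Matrix (Fin d) (Fin d) ℂ) :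
    (((frobNormalize X)ᴴ * X).trace).re = frob X := by
  unfold frobNormalize
  split_ifs with hX
  · simp [hX, frob_eq_norm_vecE, vecE_eq_zero_iff.mpr]
  · rw [conjTranspose_smul, smul_mul, trace_smul, smul_eq_mul, star_inv₀, Complex.star_def,
      Complex.conj_ofReal, ← Complex.ofReal_inv, Complex.re_ofReal_mul,
      re_trace_conjTranspose_mul_self]
    field_simp [(frob_pos hX).ne']

end Frobenius

theorem dca_step_decreases_general {d m : ℕ} (a : Fin m → Fin d → ℂ) (b : Fin m → ℝ)
    (lam mu : ℝ) (hlam : 0 ≤ lam)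
    (F : Matrix (Fin d) (Fin d) ℂ → ℝ)
    (hF : ∀ X, F X = lam * ((X.trace).re - frob X) + mu * matL1 X
        + (1/2) * (l2 (fun i => calA a X i - b i)) ^ 2)
    (X : Matrix (Fin d) (Fin d) ℂ) (hX : X.PosSemidef)
    (Y : Matrix (Fin d) (Fin d) ℂ)
    (hY : Y = if X = 0 then 0 else (frob X : ℂ)⁻¹ • X)
    (X' : Matrix (Fin d) (Fin d) ℂ)
    (hmin : ∀ Z : Matrix (Fin d) (Fin d) ℂ, Z.PosSemidef →
      (1/2) * (l2 (fun i => calA a X' i - b i)) ^ 2 + lam * (X'.trace).re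
          - lam * ((Yᴴ * X').trace).re + mu * matL1 X' ≤
      (1/2) * (l2 (fun i => calA a Z i - b i)) ^ 2 + lam * (Z.trace).re
          - lam * ((Yᴴ * Z).trace).re + mu * matL1 Z) :
    F X' ≤ F X := by
  replace hY : Y = frobNormalize X := hY
  subst hY
  have hX'_le : lam * (((frobNormalize X)ᴴ * X').trace).re ≤ lam * frob X' :=
    mul_le_mul_of_nonneg_left (re_trace_frobNormalize_mul_le X X') hlam
  have hstep := hmin X hX
  rw [re_trace_frobNormalize_mul_self] at hstep
  rw [hF, hF]
  linarith

/-- One DCA step does not increase the objective F (Lemma 5.1). -/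
theorem dca_step_decreases {d m : ℕ} (a : Fin m → Fin d → ℂ) (b : Fin m → ℝ)
    (lam mu : ℝ) (hlam : 0 ≤ lam) (hmu : 0 ≤ mu)
    (F : Matrix (Fin d) (Fin d) ℂ → ℝ)
    (hF : ∀ X, F X = lam * ((X.trace).re - frob X) + mu * matL1 X
        + (1/2) * (l2 (fun i => calA a X i - b i)) ^ 2)
    (X : Matrix (Fin d) (Fin d) ℂ) (hX : X.PosSemidef)
    (Y : Matrix (Fin d) (Fin d) ℂ)
    (hY : Y = if X = 0 then 0 else (frob X : ℂ)⁻¹ • X)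
    (X' : Matrix (Fin d) (Fin d) ℂ) (hX' : X'.PosSemidef)
    (hmin : ∀ Z : Matrix (Fin d) (Fin d) ℂ, Z.PosSemidef →
      (1/2) * (l2 (fun i => calA a X' i - b i)) ^ 2 + lam * (X'.trace).re
          - lam * ((Yᴴ * X').trace).re + mu * matL1 X' ≤
      (1/2) * (l2 (fun i => calA a Z i - b i)) ^ 2 + lam * (Z.trace).re
          - lam * ((Yᴴ * Z).trace).re + mu * matL1 Z) :
    F X' ≤ F X :=
  dca_step_decreases_general a b lam mu hlam F hF X hX Y hY X' hmin
end
end
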